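/- arXiv:0707.3116 — 5 statements merged into one kernel-verified Lean document; each statement's English description precedes it below -/
import Mathlib

section
/- Let g, h ∈ SL(2,ℝ) with g ≠ ±I and h ≠ ±I. Then 𝔤^g ∩ 𝔤^h ≠ {0} if and only if g·h = h·g. -/
open Matrix

abbrev SL2R := Matrix.SpecialLinearGroup (Fin 2) ℝ

def sl2 : Submodule ℝ (Matrix (Fin 2) (Fin 2) ℝ) where
  carrier := {X | Matrix.trace X = 0}
  add_mem' := by intro X Y hX hY; simp_all [Set.mem_setOf_eq]
  zero_mem' := by simp
  smul_mem' := by intro c X h; simp_all [Set.mem_setOf_eq]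

def gfix (g : SL2R) : Submodule ℝ (Matrix (Fin 2) (Fin 2) ℝ) where
  carrier := {X | Matrix.trace X = 0 ∧
    (g : Matrix (Fin 2) (Fin 2) ℝ) * X * (g : Matrix (Fin 2) (Fin 2) ℝ)⁻¹ = X}
  add_mem' := by
    rintro X Y ⟨hX1, hX2⟩ ⟨hY1, hY2⟩
    exact ⟨by simp [hX1, hY1], by rw [mul_add, add_mul, hX2, hY2]⟩
  zero_mem' := by simp
  smul_mem' := by
    rintro c X ⟨h1, h2⟩
    exact ⟨by simp [h1], by rw [mul_smul_comm, smul_mul_assoc, h2]⟩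

lemma aux6 (a b c p q r s p' q' r' s' : ℝ)
    (hne : ¬(a = 0 ∧ b = 0 ∧ c = 0))
    (g1 : q*c = b*r) (g2 : b*(p-s) = 2*(a*q)) (g3 : 2*(a*r) = c*(p-s))
    (k1 : q'*c = b*r') (k2 : b*(p'-s') = 2*(a*q')) (k3 : 2*(a*r') = c*(p'-s')) :
    q*r' = q'*r ∧ q'*(p-s) = q*(p'-s') ∧ r*(p'-s') = r'*(p-s) := by
  by_cases ha : a = 0
  · by_cases hb : b = 0
    · have hc : c ≠ 0 := fun hc => hne ⟨ha, hb, hc⟩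
      have hD : q*r' = q'*r := mul_left_cancel₀ hc (by linear_combination r'*g1 - r*k1)
      have hF : r*(p'-s') = r'*(p-s) := mul_left_cancel₀ hc (by linear_combination r'*g3 - r*k3)
      have hE : q'*(p-s) = q*(p'-s') := mul_left_cancel₀ hc (by linear_combination (p-s)*k1 - (p'-s')*g1 - b*hF)
      exact ⟨hD, hE, hF⟩
    · have hD : q*r' = q'*r := mul_left_cancel₀ hb (by linear_combination q'*g1 - q*k1)
      have hE : q'*(p-s) = q*(p'-s') := mul_left_cancel₀ hb (by linear_combination q'*g2 - q*k2)
      have hF : r*(p'-s') = r'*(p-s) := mul_left_cancel₀ hb (by linear_combination (p-s)*k1 - (p'-s')*g1 - c*hE)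
      exact ⟨hD, hE, hF⟩
  · have h2a : (2*a : ℝ) ≠ 0 := mul_ne_zero two_ne_zero ha
    exact ⟨mul_left_cancel₀ h2a (by linear_combination q*k3 + r*k2 + (p'-s')*g1),
           mul_left_cancel₀ h2a (by linear_combination (p'-s')*g2 - (p-s)*k2),
           mul_left_cancel₀ h2a (by linear_combination (p'-s')*g3 - (p-s)*k3)⟩

lemma conj_to_comm (g : SL2R) (X : Matrix (Fin 2) (Fin 2) ℝ)
    (hgX : (g : Matrix (Fin 2) (Fin 2) ℝ) * X * (g : Matrix (Fin 2) (Fin 2) ℝ)⁻¹ = X) :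
    (g : Matrix (Fin 2) (Fin 2) ℝ) * X = X * g := by
  have hdg : IsUnit (g : Matrix (Fin 2) (Fin 2) ℝ).det := by simp [g.prop]
  have := congrArg (fun M => M * (g : Matrix (Fin 2) (Fin 2) ℝ)) hgX
  simpa [Matrix.mul_assoc, Matrix.nonsing_inv_mul _ hdg] using this

theorem stmt6 (g h : SL2R)
    (hg : (g : Matrix (Fin 2) (Fin 2) ℝ) ≠ 1 ∧ (g : Matrix (Fin 2) (Fin 2) ℝ) ≠ -1)
    (hh : (h : Matrix (Fin 2) (Fin 2) ℝ) ≠ 1 ∧ (h : Matrix (Fin 2) (Fin 2) ℝ) ≠ -1) :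
    (∃ X : Matrix (Fin 2) (Fin 2) ℝ, X ∈ gfix g ⊓ gfix h ∧ X ≠ 0) ↔ g * h = h * g := by
  constructor
  · rintro ⟨X, hX, hX0⟩
    obtain ⟨⟨htX, hgX⟩, ⟨-, hhX⟩⟩ := hX
    have hg' := conj_to_comm g X hgX
    have hh' := conj_to_comm h X hhX
    have htr : X 1 1 = -X 0 0 := by
      rw [Matrix.trace_fin_two] at htX; linarith
    have e1 := congrFun (congrFun hg' 0) 0
    have e2 := congrFun (congrFun hg' 0) 1
    have e3 := congrFun (congrFun hg' 1) 0
    have f1 := congrFun (congrFun hh' 0) 0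
    have f2 := congrFun (congrFun hh' 0) 1
    have f3 := congrFun (congrFun hh' 1) 0
    simp [Matrix.mul_apply, Fin.sum_univ_two] at e1 e2 e3 f1 f2 f3
    have hne : ¬(X 0 0 = 0 ∧ X 0 1 = 0 ∧ X 1 0 = 0) := by
      rintro ⟨h1, h2, h3⟩
      apply hX0
      ext i j
      fin_cases i <;> fin_cases j <;> simp [h1, h2, h3, htr]
    obtain ⟨hD, hE, hF⟩ := aux6 (X 0 0) (X 0 1) (X 1 0)
      ((g : Matrix (Fin 2) (Fin 2) ℝ) 0 0) ((g : Matrix (Fin 2) (Fin 2) ℝ) 0 1)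
      ((g : Matrix (Fin 2) (Fin 2) ℝ) 1 0) ((g : Matrix (Fin 2) (Fin 2) ℝ) 1 1)
      ((h : Matrix (Fin 2) (Fin 2) ℝ) 0 0) ((h : Matrix (Fin 2) (Fin 2) ℝ) 0 1)
      ((h : Matrix (Fin 2) (Fin 2) ℝ) 1 0) ((h : Matrix (Fin 2) (Fin 2) ℝ) 1 1)
      hne
      (by linear_combination e1) (by linear_combination e2 - (g : Matrix (Fin 2) (Fin 2) ℝ) 0 1 * htr)
      (by linear_combination e3 + (g : Matrix (Fin 2) (Fin 2) ℝ) 1 0 * htr)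
      (by linear_combination f1) (by linear_combination f2 - (h : Matrix (Fin 2) (Fin 2) ℝ) 0 1 * htr)
      (by linear_combination f3 + (h : Matrix (Fin 2) (Fin 2) ℝ) 1 0 * htr)
    ext i j
    fin_cases i <;> fin_cases j <;>
      simp only [Matrix.SpecialLinearGroup.coe_mul, Matrix.mul_apply, Fin.sum_univ_two,
        Fin.mk_zero, Fin.mk_one, Fin.isValue]
    · linear_combination hD
    · linear_combination hE
    · linear_combination hF
    · linear_combination -hD
  · intro hcomm
    have hdg : IsUnit (g : Matrix (Fin 2) (Fin 2) ℝ).det := by simp [g.prop]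
    have hdh : IsUnit (h : Matrix (Fin 2) (Fin 2) ℝ).det := by simp [h.prop]
    set c : ℝ := Matrix.trace (g : Matrix (Fin 2) (Fin 2) ℝ) / 2 with hc
    set X : Matrix (Fin 2) (Fin 2) ℝ := (g : Matrix (Fin 2) (Fin 2) ℝ) - c • 1 with hXdef
    have hgh : (g : Matrix (Fin 2) (Fin 2) ℝ) * h = (h : Matrix (Fin 2) (Fin 2) ℝ) * g := by
      have := congrArg (fun z : SL2R => (z : Matrix (Fin 2) (Fin 2) ℝ)) hcomm
      simpa using this
    have htrX : Matrix.trace X = 0 := by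
      simp [hXdef, Matrix.trace_sub, Matrix.trace_smul, Matrix.trace_one, hc]
      try ring
    have hcommg : (g : Matrix (Fin 2) (Fin 2) ℝ) * X = X * g := by
      simp [hXdef, mul_sub, sub_mul, mul_smul_comm, smul_mul_assoc]
    have hcommh : (h : Matrix (Fin 2) (Fin 2) ℝ) * X = X * h := by
      simp only [hXdef, mul_sub, sub_mul, mul_smul_comm, smul_mul_assoc, mul_one, one_mul]
      rw [← hgh]
    refine ⟨X, ⟨⟨htrX, ?_⟩, ⟨htrX, ?_⟩⟩, ?_⟩
    · rw [hcommg, Matrix.mul_assoc, Matrix.mul_nonsing_inv _ hdg, Matrix.mul_one]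
    · rw [hcommh, Matrix.mul_assoc, Matrix.mul_nonsing_inv _ hdh, Matrix.mul_one]
    · intro h0
      have hgc : (g : Matrix (Fin 2) (Fin 2) ℝ) = c • 1 := by
        rwa [hXdef, sub_eq_zero] at h0
      have hdet : c ^ 2 = 1 := by
        have := g.prop
        rw [hgc] at this
        simpa [Matrix.det_smul, Fintype.card_fin] using this
      have : (c - 1) * (c + 1) = 0 := by linear_combination hdet
      rcases mul_eq_zero.mp this with h1 | h1
      · exact hg.1 (by rw [hgc, sub_eq_zero.mp h1, one_smul])
      · exact hg.2 (by rw [hgc, show c = -1 by linarith, neg_smul, one_smul])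
end

section
/- A point (g,h) ∈ SL(2,ℝ) × SL(2,ℝ) is a regular point of the commutator map p(g,h)=[g,h] (i.e., dp|_(g,h) is surjective onto 𝔰𝔩(2,ℝ)) if and only if 𝔤^g ∩ 𝔤^h = {0}. -/
/-!
Writing `K = hg`, one has `dp(ξ, η) = Ad(K) ((Ad(h⁻¹) - 1) ξ - (Ad(g⁻¹) - 1) η)`, and `Ad(k) - 1`
kills the scalars, so `(g, h)` is regular iff `𝔰𝔩₂ ≤ range (Ad(h⁻¹) - 1) + range (Ad(g⁻¹) - 1)`.
The trace form `(X, Y) ↦ tr (X Y)` is nondegenerate on all 2 × 2 matrices, and for it the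
orthogonal of `range (Ad(k⁻¹) - 1)` is the centraliser of `k` while the orthogonal of `𝔰𝔩₂` is the
line of scalars. Passing to orthogonals, regularity says that every matrix commuting with both `g`
and `h` is scalar, which is `𝔤^g ∩ 𝔤^h = 0` after removing the trace.
-/


open Matrix

/-- Ad(k)X = k X k⁻¹ for matrices. -/
noncomputable def Ad (k X : Matrix (Fin 2) (Fin 2) ℝ) : Matrix (Fin 2) (Fin 2) ℝ :=
  k * X * k⁻¹

/-- The derivative of the commutator map at (g,h) in left trivialization:
`dp|_(g,h)(ξ,η) = Ad(hgh⁻¹)ξ − Ad(hg)ξ + Ad(hg)η − Ad(h)η`. -/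
noncomputable def dpExpr (g h : SL2R) (ξ η : Matrix (Fin 2) (Fin 2) ℝ) :
    Matrix (Fin 2) (Fin 2) ℝ :=
  Ad ((h : Matrix (Fin 2) (Fin 2) ℝ) * (g : Matrix (Fin 2) (Fin 2) ℝ) *
      (h : Matrix (Fin 2) (Fin 2) ℝ)⁻¹) ξ -
    Ad ((h : Matrix (Fin 2) (Fin 2) ℝ) * (g : Matrix (Fin 2) (Fin 2) ℝ)) ξ +
    Ad ((h : Matrix (Fin 2) (Fin 2) ℝ) * (g : Matrix (Fin 2) (Fin 2) ℝ)) η -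
    Ad (h : Matrix (Fin 2) (Fin 2) ℝ) η

namespace Matrix

variable {n R : Type*} [Fintype n] [DecidableEq n] [Field R]

def traceDual : Matrix n n R →ₗ[R] Module.Dual R (Matrix n n R) :=
  LinearMap.mk₂ R (fun X Y => trace (X * Y))
    (fun X X' Y => by rw [add_mul, trace_add])
    (fun c X Y => by rw [smul_mul_assoc, trace_smul])
    (fun X Y Y' => by rw [mul_add, trace_add])
    (fun c X Y => by rw [mul_smul_comm, trace_smul])

@[simp]
theorem traceDual_apply (X Y : Matrix n n R) : traceDual X Y = trace (X * Y) := rfl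

theorem traceDual_injective : Function.Injective (traceDual : Matrix n n R → _) :=
  fun _ _ hXX' => ext_iff_trace_mul_right.mpr fun Y => LinearMap.congr_fun hXX' Y

theorem traceDual_surjective : Function.Surjective (traceDual : Matrix n n R → _) :=
  (LinearMap.injective_iff_surjective_of_finrank_eq_finrank
    Subspace.dual_finrank_eq.symm).mp traceDual_injective

def traceOrth (W : Submodule R (Matrix n n R)) : Submodule R (Matrix n n R) :=
  W.dualAnnihilator.comap traceDual

theorem mem_traceOrth {W : Submodule R (Matrix n n R)} {X : Matrix n n R} :
    X ∈ traceOrth W ↔ ∀ Y ∈ W, trace (X * Y) = 0 := by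
  simp [traceOrth, Submodule.mem_dualAnnihilator]

theorem traceOrth_le_traceOrth_iff {W W' : Submodule R (Matrix n n R)} :
    traceOrth W ≤ traceOrth W' ↔ W' ≤ W := by
  rw [traceOrth, traceOrth, Submodule.comap_le_comap_iff_of_surjective traceDual_surjective,
    Subspace.dualAnnihilator_le_dualAnnihilator_iff]

theorem traceOrth_sup (W W' : Submodule R (Matrix n n R)) :
    traceOrth (W ⊔ W') = traceOrth W ⊓ traceOrth W' := by
  rw [traceOrth, Submodule.dualAnnihilator_sup_eq, Submodule.comap_inf]; rfl

theorem traceOrth_ker_trace :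
    traceOrth (LinearMap.ker (traceLinearMap n R R)) = R ∙ (1 : Matrix n n R) := by
  ext X
  rw [traceOrth, Submodule.mem_comap, ← LinearMap.range_dualMap_eq_dualAnnihilator_ker,
    LinearMap.mem_range, Submodule.mem_span_singleton]
  constructor
  · rintro ⟨φ, hφ⟩
    refine ⟨φ 1, traceDual_injective (LinearMap.ext fun Y => ?_)⟩
    have hφY : φ (trace Y) = trace Y * φ 1 := by rw [← smul_eq_mul, ← map_smul, smul_eq_mul, mul_one]
    rw [← hφ, traceDual_apply, smul_mul_assoc, one_mul, trace_smul, smul_eq_mul,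
      LinearMap.dualMap_apply, traceLinearMap_apply, hφY, mul_comm]
  · rintro ⟨c, rfl⟩
    refine ⟨c • LinearMap.id, LinearMap.ext fun Y => ?_⟩
    simp

end Matrix

open Matrix

local notation "M₂" => Matrix (Fin 2) (Fin 2) ℝ

theorem Ad_mul (A B X : M₂) : Ad (A * B) X = Ad A (Ad B X) := by
  simp only [Ad, Matrix.mul_inv_rev, mul_assoc]

theorem Ad_add (k X Y : M₂) : Ad k (X + Y) = Ad k X + Ad k Y := by
  simp only [Ad, mul_add, add_mul]

theorem Ad_sub (k X Y : M₂) : Ad k (X - Y) = Ad k X - Ad k Y := by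
  simp only [Ad, mul_sub, sub_mul]

section Ad

variable {k : M₂}

theorem Ad_smul_one (hk : IsUnit k.det) (c : ℝ) : Ad k (c • 1) = c • 1 := by
  rw [Ad, mul_smul_comm, mul_one, smul_mul_assoc, mul_nonsing_inv _ hk]

theorem Ad_inv_Ad (hk : IsUnit k.det) (X : M₂) : Ad k⁻¹ (Ad k X) = X := by
  rw [← Ad_mul, nonsing_inv_mul _ hk, Ad, inv_one, one_mul, mul_one]

theorem Ad_Ad_inv (hk : IsUnit k.det) (X : M₂) : Ad k (Ad k⁻¹ X) = X := by
  rw [← Ad_mul, mul_nonsing_inv _ hk, Ad, inv_one, one_mul, mul_one]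

theorem trace_Ad (hk : IsUnit k.det) (X : M₂) : trace (Ad k X) = trace X := by
  rw [Ad, trace_mul_cycle, nonsing_inv_mul _ hk, one_mul]

theorem trace_mul_Ad_inv (hk : IsUnit k.det) (X Y : M₂) :
    trace (X * Ad k⁻¹ Y) = trace (Ad k X * Y) := by
  rw [Ad, nonsing_inv_nonsing_inv _ hk, Ad, ← mul_assoc, ← mul_assoc, trace_mul_cycle]
  simp only [mul_assoc]

end Ad

noncomputable def adSubOne (k : M₂) : M₂ →ₗ[ℝ] M₂ where
  toFun X := Ad k X - X
  map_add' X Y := by rw [Ad_add]; abel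
  map_smul' c X := by simp only [Ad, mul_smul_comm, smul_mul_assoc, smul_sub, RingHom.id_apply]

theorem adSubOne_apply (k X : M₂) : adSubOne k X = Ad k X - X := rfl

theorem trace_sub_half_trace_smul_one (X : M₂) : trace (X - (trace X / 2) • 1) = 0 := by
  rw [trace_sub, trace_smul, trace_one, Fintype.card_fin, smul_eq_mul]; ring

theorem exists_trace_eq_zero_adSubOne_eq {k : M₂} (hk : IsUnit k.det) (X : M₂) :
    ∃ X₀, trace X₀ = 0 ∧ adSubOne k X₀ = adSubOne k X := by
  refine ⟨X - (trace X / 2) • 1, trace_sub_half_trace_smul_one X, ?_⟩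
  rw [adSubOne_apply, adSubOne_apply, Ad_sub, Ad_smul_one hk]; abel

theorem mem_traceOrth_range_adSubOne_inv {k : M₂} (hk : IsUnit k.det) (X : M₂) :
    X ∈ traceOrth (LinearMap.range (adSubOne k⁻¹)) ↔ Ad k X = X := by
  simp only [mem_traceOrth, LinearMap.mem_range, forall_exists_index, forall_apply_eq_imp_iff,
    adSubOne_apply, mul_sub, trace_sub, trace_mul_Ad_inv hk, sub_eq_zero]
  exact ext_iff_trace_mul_right.symm

theorem sl2_eq_ker_trace : sl2 = LinearMap.ker (traceLinearMap (Fin 2) ℝ ℝ) := rfl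

theorem isUnit_det_coe (g : SL2R) : IsUnit (g : M₂).det := by
  simp

theorem dpExpr_eq_Ad (g h : SL2R) (ξ η : M₂) :
    dpExpr g h ξ η = Ad ((h : M₂) * (g : M₂)) (adSubOne (h : M₂)⁻¹ ξ - adSubOne (g : M₂)⁻¹ η) := by
  rw [adSubOne_apply, adSubOne_apply, Ad_sub, Ad_sub, Ad_sub, ← Ad_mul, ← Ad_mul,
    mul_nonsing_inv_cancel_right _ _ (isUnit_det_coe g), dpExpr]
  abel

theorem regular_iff_sl2_le_range_sup (g h : SL2R) :
    (∀ Z : M₂, trace Z = 0 → ∃ ξ η : M₂, trace ξ = 0 ∧ trace η = 0 ∧ dpExpr g h ξ η = Z) ↔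
      sl2 ≤ LinearMap.range (adSubOne (h : M₂)⁻¹) ⊔ LinearMap.range (adSubOne (g : M₂)⁻¹) := by
  have hK : IsUnit ((h : M₂) * g).det := by
    rw [det_mul]; exact (isUnit_det_coe h).mul (isUnit_det_coe g)
  simp only [dpExpr_eq_Ad]
  constructor
  · intro hreg Z hZ
    obtain ⟨ξ, η, -, -, hξη⟩ := hreg (Ad ((h : M₂) * g) Z) (by rw [trace_Ad hK]; exact hZ)
    have hZ_eq : adSubOne (h : M₂)⁻¹ ξ - adSubOne (g : M₂)⁻¹ η = Z := by
      simpa only [Ad_inv_Ad hK] using congrArg (Ad ((h : M₂) * g)⁻¹) hξη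
    rw [← hZ_eq]
    exact sub_mem (Submodule.mem_sup_left ⟨ξ, rfl⟩) (Submodule.mem_sup_right ⟨η, rfl⟩)
  · intro hle Z hZ
    have hZ' : Ad ((h : M₂) * g)⁻¹ Z ∈ sl2 := by
      show trace _ = 0
      rw [trace_Ad (isUnit_nonsing_inv_det _ hK)]; exact hZ
    obtain ⟨_, ⟨ξ, rfl⟩, _, ⟨η, rfl⟩, hξη⟩ := Submodule.mem_sup.mp (hle hZ')
    obtain ⟨ξ₀, hξ₀, hξ⟩ :=
      exists_trace_eq_zero_adSubOne_eq (isUnit_nonsing_inv_det _ (isUnit_det_coe h)) ξ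
    obtain ⟨η₀, hη₀, hη⟩ :=
      exists_trace_eq_zero_adSubOne_eq (isUnit_nonsing_inv_det _ (isUnit_det_coe g)) (-η)
    refine ⟨ξ₀, η₀, hξ₀, hη₀, ?_⟩
    rw [hξ, hη, map_neg, sub_neg_eq_add, hξη, Ad_Ad_inv hK]

theorem gfix_inf_eq_bot_iff (g h : SL2R) :
    gfix g ⊓ gfix h = ⊥ ↔ ∀ X : M₂, Ad h X = X → Ad g X = X → X ∈ ℝ ∙ (1 : M₂) := by
  constructor
  · intro hbot X hh hg
    have hfix : ∀ k : SL2R, Ad k X = X → Ad k (X - (trace X / 2) • 1) = X - (trace X / 2) • 1 :=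
      fun k hk => by rw [Ad_sub, hk, Ad_smul_one (isUnit_det_coe k)]
    have hmem : X - (trace X / 2) • 1 ∈ gfix g ⊓ gfix h :=
      ⟨⟨trace_sub_half_trace_smul_one X, hfix g hg⟩, ⟨trace_sub_half_trace_smul_one X, hfix h hh⟩⟩
    rw [hbot, Submodule.mem_bot, sub_eq_zero] at hmem
    exact Submodule.mem_span_singleton.mpr ⟨_, hmem.symm⟩
  · intro hscalar
    refine eq_bot_iff.mpr fun X ⟨⟨htr, hg⟩, ⟨_, hh⟩⟩ => ?_
    obtain ⟨c, rfl⟩ := Submodule.mem_span_singleton.mp (hscalar X hh hg)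
    rw [trace_smul, trace_one, Fintype.card_fin, smul_eq_mul] at htr
    rw [Submodule.mem_bot, show c = 0 by simpa using htr, zero_smul]

/-- (g,h) is regular for the commutator map iff 𝔤^g ∩ 𝔤^h = 0. -/
theorem stmt9 (g h : SL2R) :
    (∀ Z : Matrix (Fin 2) (Fin 2) ℝ, Matrix.trace Z = 0 →
      ∃ ξ η : Matrix (Fin 2) (Fin 2) ℝ, Matrix.trace ξ = 0 ∧ Matrix.trace η = 0 ∧
        dpExpr g h ξ η = Z) ↔ gfix g ⊓ gfix h = ⊥ := by
  rw [regular_iff_sl2_le_range_sup, gfix_inf_eq_bot_iff, ← traceOrth_le_traceOrth_iff,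
    traceOrth_sup, sl2_eq_ker_trace, traceOrth_ker_trace]
  simp only [SetLike.le_def, Submodule.mem_inf,
    mem_traceOrth_range_adSubOne_inv (isUnit_det_coe _), and_imp]
end

section
/- For g, h ∈ SL(2,ℝ), the commutator map p(g,h)=[g,h] is regular at (g,h) (its derivative is surjective) if and only if [g,h] ≠ 1, equivalently g and h do not commute. -/
open Matrix

namespace Stmt10Aux

local notation "M2" => Matrix (Fin 2) (Fin 2) ℝ

lemma coe_inv_eq (k : SL2R) : ((k : M2))⁻¹ = ((k⁻¹ : SL2R) : M2) := by
  rw [Matrix.inv_def, Matrix.SpecialLinearGroup.det_coe, Matrix.SpecialLinearGroup.coe_inv]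
  simp

lemma coe_inv_mul_cancel (k : SL2R) : ((k⁻¹ : SL2R) : M2) * (k : M2) = 1 := by
  rw [← Matrix.SpecialLinearGroup.coe_mul, inv_mul_cancel, Matrix.SpecialLinearGroup.coe_one]

lemma coe_mul_inv_cancel (k : SL2R) : (k : M2) * ((k⁻¹ : SL2R) : M2) = 1 := by
  rw [← Matrix.SpecialLinearGroup.coe_mul, mul_inv_cancel, Matrix.SpecialLinearGroup.coe_one]

noncomputable def cj (k : SL2R) (W : M2) : M2 := ((k⁻¹ : SL2R) : M2) * W * (k : M2)

lemma cj_mul (a b : SL2R) (W : M2) : cj (a * b) W = cj b (cj a W) := by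
  simp [cj, _root_.mul_inv_rev, Matrix.SpecialLinearGroup.coe_mul, mul_assoc]

lemma trace_cj (k : SL2R) (W : M2) : (cj k W).trace = W.trace := by
  rw [cj, Matrix.trace_mul_cycle, coe_mul_inv_cancel, one_mul]

lemma trace_Ad (k : SL2R) (X : M2) : (Ad (k : M2) X).trace = X.trace := by
  rw [Ad, coe_inv_eq, Matrix.trace_mul_cycle, coe_inv_mul_cancel, one_mul]

lemma trace_pair (k : SL2R) (W X : M2) :
    (W * Ad (k : M2) X).trace = (cj k W * X).trace := by
  rw [Ad, coe_inv_eq, cj]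
  rw [show W * ((k : M2) * X * ((k⁻¹ : SL2R) : M2)) = W * (k : M2) * X * ((k⁻¹ : SL2R) : M2) by
    simp [mul_assoc]]
  rw [Matrix.trace_mul_comm (W * (k : M2) * X)]
  simp [mul_assoc]

lemma cj_fix (k : SL2R) (W : M2) (hc : W * (k : M2) = (k : M2) * W) : cj k W = W := by
  rw [cj, mul_assoc, hc, ← mul_assoc, coe_inv_mul_cancel, one_mul]

lemma fix_comm (k : SL2R) (W : M2) (hfix : cj k W = W) : W * (k : M2) = (k : M2) * W := by
  have := congrArg (fun Y : M2 => (k : M2) * Y) hfix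
  simp only [cj, ← mul_assoc, coe_mul_inv_cancel, one_mul] at this
  rw [this]

lemma comm_inv (k : SL2R) (W : M2) (hc : W * (k : M2) = (k : M2) * W) :
    W * ((k⁻¹ : SL2R) : M2) = ((k⁻¹ : SL2R) : M2) * W := by
  have h := congrArg (fun Y : M2 => ((k⁻¹ : SL2R) : M2) * Y * ((k⁻¹ : SL2R) : M2)) hc
  simp only [← mul_assoc, coe_inv_mul_cancel, one_mul] at h
  rw [mul_assoc, mul_assoc, coe_mul_inv_cancel, mul_one] at h
  exact h.symm

lemma cj_cancel (k : SL2R) (W : M2) : (k : M2) * cj k W * ((k⁻¹ : SL2R) : M2) = W := by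
  have h1 : ∀ Z : M2, (k : M2) * (((k⁻¹ : SL2R) : M2) * Z) = Z := fun Z => by
    rw [← mul_assoc, coe_mul_inv_cancel, one_mul]
  simp only [cj, mul_assoc, h1, coe_mul_inv_cancel, mul_one]

lemma eq_zero_of_perp (A : M2) (h0 : A.trace = 0)
    (hp : ∀ X : M2, X.trace = 0 → (A * X).trace = 0) : A = 0 := by
  have h1 := hp !![0,1;0,0] (by simp [Matrix.trace_fin_two])
  have h2 := hp !![0,0;1,0] (by simp [Matrix.trace_fin_two])
  have h3 := hp !![1,0;0,-1] (by simp [Matrix.trace_fin_two])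
  simp [Matrix.trace_fin_two, Matrix.mul_apply, Fin.sum_univ_two] at h1 h2 h3
  rw [Matrix.trace_fin_two] at h0
  ext i j
  fin_cases i <;> fin_cases j <;> simp <;> linarith

lemma minors {x y z q r A t u S : ℝ} (hxyz : x ≠ 0 ∨ y ≠ 0 ∨ z ≠ 0)
    (h1 : y * r = z * q) (h2 : 2 * x * q = y * A) (h3 : z * A = 2 * x * r)
    (k1 : y * u = z * t) (k2 : 2 * x * t = y * S) (k3 : z * S = 2 * x * u) :
    q * u = t * r ∧ t * A = q * S ∧ r * S = u * A := by
  rcases hxyz with hx | hy | hz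
  · have m1 : (2 * x) * (q * u) = (2 * x) * (t * r) := by linear_combination u * h2 + A * k1 + t * h3
    have m1' : q * u = t * r := mul_left_cancel₀ (by simpa using hx) m1
    have m2 : (2 * x) * (t * A) = (2 * x) * (q * S) := by linear_combination A * k2 - S * h2
    have m3 : (2 * x) * (r * S) = (2 * x) * (u * A) := by linear_combination A * k3 - S * h3
    exact ⟨m1', mul_left_cancel₀ (by simpa using hx) m2, mul_left_cancel₀ (by simpa using hx) m3⟩
  · have m1 : y * (q * u) = y * (t * r) := by linear_combination q * k1 - t * h1
    have m1' : q * u = t * r := mul_left_cancel₀ hy m1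
    have m2 : y * (t * A) = y * (q * S) := by linear_combination q * k2 - t * h2
    have m2' : t * A = q * S := mul_left_cancel₀ hy m2
    have m3 : y * (r * S) = y * (u * A) := by linear_combination S * h1 - A * k1 - z * m2'
    exact ⟨m1', m2', mul_left_cancel₀ hy m3⟩
  · have m1 : z * (q * u) = z * (t * r) := by linear_combination r * k1 - u * h1
    have m1' : q * u = t * r := mul_left_cancel₀ hz m1
    have m2 : z * (t * A) = z * (q * S) := by linear_combination t * h3 - q * k3 - 2 * x * m1'
    have m3 : z * (r * S) = z * (u * A) := by linear_combination r * k3 - u * h3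
    exact ⟨m1', mul_left_cancel₀ hz m2, mul_left_cancel₀ hz m3⟩

set_option linter.unreachableTactic false in
set_option linter.unusedTactic false in
lemma key (X a b : M2) (htr : X.trace = 0) (hX : X ≠ 0)
    (ha : X * a = a * X) (hb : X * b = b * X) : a * b = b * a := by
  have hw : X 1 1 = -X 0 0 := by rw [Matrix.trace_fin_two] at htr; linarith
  have hxyz : X 0 0 ≠ 0 ∨ X 0 1 ≠ 0 ∨ X 1 0 ≠ 0 := by
    by_contra hcon
    push_neg at hcon
    obtain ⟨e1, e2, e3⟩ := hcon
    apply hX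
    ext i j
    fin_cases i <;> fin_cases j <;> simp [e1, e2, e3, hw]
  have Ea := fun i j => congrFun (congrFun ha i) j
  have Eb := fun i j => congrFun (congrFun hb i) j
  have Ea00 := Ea 0 0; have Ea01 := Ea 0 1; have Ea10 := Ea 1 0
  have Eb00 := Eb 0 0; have Eb01 := Eb 0 1; have Eb10 := Eb 1 0
  simp only [Matrix.mul_apply, Fin.sum_univ_two] at Ea00 Ea01 Ea10 Eb00 Eb01 Eb10
  obtain ⟨m1, m2, m3⟩ := minors (x := X 0 0) (y := X 0 1) (z := X 1 0)
    (q := a 0 1) (r := a 1 0) (A := a 0 0 - a 1 1)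
    (t := b 0 1) (u := b 1 0) (S := b 0 0 - b 1 1) hxyz
    (by linear_combination Ea00) (by linear_combination Ea01 + a 0 1 * hw)
    (by linear_combination Ea10 - a 1 0 * hw)
    (by linear_combination Eb00) (by linear_combination Eb01 + b 0 1 * hw)
    (by linear_combination Eb10 - b 1 0 * hw)
  ext i j
  fin_cases i <;> fin_cases j <;>
    simp only [Matrix.mul_apply, Fin.sum_univ_two, Fin.mk_zero, Fin.mk_one, Fin.isValue] <;>
    first
      | linear_combination m1
      | linear_combination -m1
      | linear_combination m2
      | linear_combination -m2
      | linear_combination m3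
      | linear_combination -m3

lemma exists_repr (f : Module.Dual ℝ (Matrix (Fin 2) (Fin 2) ℝ)) :
    ∃ W : M2, ∀ X : M2, (W * X).trace = f X := by
  refine ⟨!![f !![1,0;0,0], f !![0,0;1,0]; f !![0,1;0,0], f !![0,0;0,1]], fun X => ?_⟩
  have hX : X = X 0 0 • !![(1:ℝ),0;0,0] + X 0 1 • !![0,1;0,0] +
      X 1 0 • !![0,0;1,0] + X 1 1 • !![0,0;0,1] := by
    ext i j
    fin_cases i <;> fin_cases j <;> simp
  conv_rhs => rw [hX]
  simp only [map_add, _root_.map_smul, smul_eq_mul]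
  rw [Matrix.trace_fin_two]
  simp only [Matrix.mul_apply, Fin.sum_univ_two]
  simp
  ring

lemma eq_zero_of_trace_mul_transpose {W : M2} (h : (W * Wᵀ).trace = 0) : W = 0 := by
  simp only [Matrix.trace_fin_two, Matrix.mul_apply, Fin.sum_univ_two,
    Matrix.transpose_apply] at h
  ext i j
  fin_cases i <;> fin_cases j <;> simp <;> nlinarith [sq_nonneg (W 0 0), sq_nonneg (W 0 1),
    sq_nonneg (W 1 0), sq_nonneg (W 1 1)]

lemma exists_comm_W (G H : M2) (hGH : G * H = H * G) :
    ∃ W : M2, W ≠ 0 ∧ W.trace = 0 ∧ W * G = G * W ∧ W * H = H * W := by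
  have tr1 : (1 : M2).trace = 2 := by simp [Matrix.trace_fin_two]
  by_cases h1 : G - (G.trace / 2) • 1 = 0
  · have hGs : G = (G.trace / 2) • (1 : M2) := sub_eq_zero.mp h1
    by_cases h2 : H - (H.trace / 2) • 1 = 0
    · have hHs : H = (H.trace / 2) • (1 : M2) := sub_eq_zero.mp h2
      refine ⟨!![0,1;0,0], ?_, by simp [Matrix.trace_fin_two], ?_, ?_⟩
      · intro hc
        have := congrFun (congrFun hc 0) 1
        simp at this
      · rw [hGs]; simp [mul_smul_comm, smul_mul_assoc]
      · rw [hHs]; simp [mul_smul_comm, smul_mul_assoc]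
    · refine ⟨H - (H.trace / 2) • 1, h2, ?_, ?_, ?_⟩
      · simp [Matrix.trace_smul, tr1]
      · rw [sub_mul, mul_sub, hGH.symm, smul_mul_assoc, mul_smul_comm, one_mul, mul_one]
      · rw [sub_mul, mul_sub, smul_mul_assoc, mul_smul_comm, one_mul, mul_one]
  · refine ⟨G - (G.trace / 2) • 1, h1, ?_, ?_, ?_⟩
    · simp [Matrix.trace_smul, tr1]
    · rw [sub_mul, mul_sub, smul_mul_assoc, mul_smul_comm, one_mul, mul_one]
    · rw [sub_mul, mul_sub, hGH, smul_mul_assoc, mul_smul_comm, one_mul, mul_one]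

lemma dp_eq (g h : SL2R) (ξ η : M2) :
    dpExpr g h ξ η = Ad (((h * g * h⁻¹ : SL2R) : M2)) ξ - Ad (((h * g : SL2R) : M2)) ξ
      + Ad (((h * g : SL2R) : M2)) η - Ad ((h : SL2R) : M2) η := by
  rw [dpExpr, show ((h : M2) * (g : M2) * ((h : M2))⁻¹) = ((h * g * h⁻¹ : SL2R) : M2) by
      rw [coe_inv_eq]; simp [Matrix.SpecialLinearGroup.coe_mul],
    show ((h : M2) * (g : M2)) = ((h * g : SL2R) : M2) by
      rw [Matrix.SpecialLinearGroup.coe_mul]]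

lemma trace_W_dp (W : M2) (g h : SL2R) (ξ η : M2) :
    (W * dpExpr g h ξ η).trace =
      (cj (h * g * h⁻¹) W * ξ).trace - (cj (h * g) W * ξ).trace
        + (cj (h * g) W * η).trace - (cj h W * η).trace := by
  rw [dp_eq, mul_sub, mul_add, mul_sub, Matrix.trace_sub, Matrix.trace_add, Matrix.trace_sub,
    trace_pair, trace_pair, trace_pair, trace_pair]

lemma dp_trace (g h : SL2R) (ξ η : M2) : (dpExpr g h ξ η).trace = 0 := by
  rw [dp_eq, Matrix.trace_sub, Matrix.trace_add, Matrix.trace_sub,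
    trace_Ad, trace_Ad, trace_Ad, trace_Ad]
  ring

lemma dp_add (g h : SL2R) (ξ η ξ' η' : M2) :
    dpExpr g h (ξ + ξ') (η + η') = dpExpr g h ξ η + dpExpr g h ξ' η' := by
  simp only [dpExpr, Ad, mul_add, add_mul]
  abel

lemma dp_smul (g h : SL2R) (c : ℝ) (ξ η : M2) :
    dpExpr g h (c • ξ) (c • η) = c • dpExpr g h ξ η := by
  simp only [dpExpr, Ad, mul_smul_comm, smul_mul_assoc, smul_sub, smul_add]

lemma dp_zero (g h : SL2R) : dpExpr g h 0 0 = 0 := by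
  simp [dpExpr, Ad]

def Dsub (g h : SL2R) : Submodule ℝ (Matrix (Fin 2) (Fin 2) ℝ) where
  carrier := {Z | ∃ ξ η : M2, ξ.trace = 0 ∧ η.trace = 0 ∧ dpExpr g h ξ η = Z}
  add_mem' := by
    rintro Z Z' ⟨ξ, η, h1, h2, rfl⟩ ⟨ξ', η', h1', h2', rfl⟩
    exact ⟨ξ + ξ', η + η', by simp [h1, h1'], by simp [h2, h2'], dp_add g h ξ η ξ' η'⟩
  zero_mem' := ⟨0, 0, by simp, by simp, dp_zero g h⟩
  smul_mem' := by
    rintro c Z ⟨ξ, η, h1, h2, rfl⟩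
    exact ⟨c • ξ, c • η, by simp [h1], by simp [h2], dp_smul g h c ξ η⟩

end Stmt10Aux

open Stmt10Aux in
/-- (g,h) is regular for the commutator map iff [g,h] ≠ 1, i.e. g and h do not commute. -/
theorem stmt10 (g h : SL2R) :
    ((∀ Z : Matrix (Fin 2) (Fin 2) ℝ, Matrix.trace Z = 0 →
      ∃ ξ η : Matrix (Fin 2) (Fin 2) ℝ, Matrix.trace ξ = 0 ∧ Matrix.trace η = 0 ∧
        dpExpr g h ξ η = Z) ↔ g * h * g⁻¹ * h⁻¹ ≠ 1) ∧
    (g * h * g⁻¹ * h⁻¹ ≠ 1 ↔ g * h ≠ h * g) := by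
  have iff2 : (g * h * g⁻¹ * h⁻¹ ≠ 1 ↔ g * h ≠ h * g) := by
    apply not_congr
    rw [← commutatorElement_def, commutatorElement_eq_one_iff_mul_comm]
  refine ⟨?_, iff2⟩
  constructor
  · -- surjective → [g,h] ≠ 1
    intro hsurj
    rw [iff2]
    intro hcomm
    have hGH : (g : Matrix (Fin 2) (Fin 2) ℝ) * (h : Matrix (Fin 2) (Fin 2) ℝ)
        = (h : Matrix (Fin 2) (Fin 2) ℝ) * (g : Matrix (Fin 2) (Fin 2) ℝ) := by
      rw [← Matrix.SpecialLinearGroup.coe_mul, ← Matrix.SpecialLinearGroup.coe_mul, hcomm]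
    obtain ⟨W, hW0, hWtr, hWg, hWh⟩ := exists_comm_W (g : Matrix (Fin 2) (Fin 2) ℝ) h hGH
    have fixh : cj h W = W := cj_fix h W hWh
    have fixhg : cj (h * g) W = W := by
      rw [cj_mul, fixh]; exact cj_fix g W hWg
    have fixhgh : cj (h * g * h⁻¹) W = W := by
      rw [cj_mul, fixhg]
      exact cj_fix h⁻¹ W (comm_inv h W hWh)
    obtain ⟨ξ, η, hξ, hη, hdp⟩ := hsurj Wᵀ (by rw [Matrix.trace_transpose, hWtr])
    have hzero : (W * Wᵀ).trace = 0 := by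
      rw [← hdp, trace_W_dp, fixh, fixhg, fixhgh]; ring
    exact hW0 (eq_zero_of_trace_mul_transpose hzero)
  · -- [g,h] ≠ 1 → surjective
    intro hne Z hZ
    rw [iff2] at hne
    have hS : Dsub g h ⊔ Submodule.span ℝ {(1 : Matrix (Fin 2) (Fin 2) ℝ)} = ⊤ := by
      by_contra hne'
      obtain ⟨f, hf0, hfbot⟩ :=
        Submodule.exists_dual_map_eq_bot_of_lt_top (lt_top_iff_ne_top.mpr hne') inferInstance
      have hfS : ∀ v ∈ Dsub g h ⊔ Submodule.span ℝ {(1 : Matrix (Fin 2) (Fin 2) ℝ)},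
          f v = 0 := by
        intro v hv
        have hm : f v ∈ Submodule.map f
            (Dsub g h ⊔ Submodule.span ℝ {(1 : Matrix (Fin 2) (Fin 2) ℝ)}) :=
          Submodule.mem_map_of_mem hv
        rw [hfbot] at hm
        simpa using hm
      obtain ⟨W, hW⟩ := exists_repr f
      have htrW : W.trace = 0 := by
        have h1 := hfS 1 (Submodule.mem_sup_right (Submodule.mem_span_singleton_self _))
        rw [← hW] at h1
        simpa using h1
      have hperp : ∀ ξ η : Matrix (Fin 2) (Fin 2) ℝ, ξ.trace = 0 → η.trace = 0 →
          (cj (h * g * h⁻¹) W * ξ).trace - (cj (h * g) W * ξ).trace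
            + (cj (h * g) W * η).trace - (cj h W * η).trace = 0 := by
        intro ξ η hξ hη
        rw [← trace_W_dp, hW]
        exact hfS _ (Submodule.mem_sup_left ⟨ξ, η, hξ, hη, rfl⟩)
      have e1 : cj (h * g) W = cj h W := by
        rw [← sub_eq_zero]
        apply eq_zero_of_perp
        · rw [Matrix.trace_sub, trace_cj, trace_cj, htrW, sub_zero]
        · intro X hX
          have hp := hperp 0 X (by simp) hX
          simp only [mul_zero, Matrix.trace_zero] at hp
          rw [sub_mul, Matrix.trace_sub]
          linarith
      have e2 : cj (h * g * h⁻¹) W = cj (h * g) W := by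
        rw [← sub_eq_zero]
        apply eq_zero_of_perp
        · rw [Matrix.trace_sub, trace_cj, trace_cj, htrW, sub_zero]
        · intro X hX
          have hp := hperp X 0 hX (by simp)
          simp only [mul_zero, Matrix.trace_zero] at hp
          rw [sub_mul, Matrix.trace_sub]
          linarith
      have hgW' : (cj h W) * (g : Matrix (Fin 2) (Fin 2) ℝ)
          = (g : Matrix (Fin 2) (Fin 2) ℝ) * (cj h W) := by
        apply fix_comm
        rw [← cj_mul]
        exact e1
      have hhW' : (cj h W) * (h : Matrix (Fin 2) (Fin 2) ℝ)
          = (h : Matrix (Fin 2) (Fin 2) ℝ) * (cj h W) := by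
        have fix : cj h⁻¹ (cj h W) = cj h W := by
          rw [← e1, ← cj_mul]
          rw [e2, e1]
        have hcomm' := fix_comm h⁻¹ (cj h W) fix
        have hfin := comm_inv h⁻¹ (cj h W) hcomm'
        rw [inv_inv] at hfin
        exact hfin
      have hW'0 : cj h W = 0 := by
        by_contra hne''
        have hc := key (cj h W) (g : Matrix (Fin 2) (Fin 2) ℝ) h
          (by rw [trace_cj, htrW]) hne'' hgW' hhW'
        apply hne
        apply Subtype.coe_injective
        show ((g * h : SL2R) : Matrix (Fin 2) (Fin 2) ℝ) = ((h * g : SL2R) : Matrix (Fin 2) (Fin 2) ℝ)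
        rw [Matrix.SpecialLinearGroup.coe_mul, Matrix.SpecialLinearGroup.coe_mul]
        exact hc
      have hWzero : W = 0 := by
        rw [← cj_cancel h W, hW'0, mul_zero, zero_mul]
      exact hf0 (LinearMap.ext fun X => by rw [← hW X, hWzero, zero_mul]; simp)
    have hZS : Z ∈ Dsub g h ⊔ Submodule.span ℝ {(1 : Matrix (Fin 2) (Fin 2) ℝ)} :=
      hS ▸ Submodule.mem_top
    obtain ⟨v, hv, w, hw, rfl⟩ := Submodule.mem_sup.mp hZS
    obtain ⟨c, rfl⟩ := Submodule.mem_span_singleton.mp hw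
    obtain ⟨ξ, η, h1, h2, hdp⟩ := hv
    have hvt : v.trace = 0 := by rw [← hdp]; exact dp_trace g h ξ η
    have hc0 : c = 0 := by
      rw [Matrix.trace_add, hvt, Matrix.trace_smul] at hZ
      have tr1 : (1 : Matrix (Fin 2) (Fin 2) ℝ).trace = 2 := by simp [Matrix.trace_fin_two]
      rw [tr1] at hZ
      simpa using hZ
    exact ⟨ξ, η, h1, h2, by rw [hdp, hc0, zero_smul, add_zero]⟩
end

section
/- Let h = (α β; β̄ ᾱ) ∈ SU(1,1) and a = diag(λ, λ̄) with |λ| = 1 and λ of infinite order in the circle group. Then tr(h·aⁿ) = 2·Re(α·λⁿ), and if α ≠ 0 there exists n ∈ ℕ such that |tr(h·aⁿ)| < 2 (i.e., h·aⁿ is elliptic). -/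
open Matrix Complex

/-!
The trace of `h * aⁿ` is `α λⁿ + conj (α λⁿ) = 2 Re (α λⁿ)`. Since `λ` has infinite order, its
powers are dense in the unit circle, so `λⁿ` comes arbitrarily close to a unit `w` with
`Re (α w) = 0`; then `|Re (α λⁿ)| < 1`.
-/

theorem Matrix.trace_fin_two_mul_diagonal_pow {R : Type*} [CommSemiring R] (a b c d x y : R)
    (n : ℕ) : trace (!![a, b; c, d] * diagonal ![x, y] ^ n) = a * x ^ n + d * y ^ n := by
  simp [diagonal_pow, trace_fin_two, vecMul, dotProduct, Fin.sum_univ_two]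

theorem Circle.denseRange_pow {z : Circle} (hz : ¬IsOfFinOrder z) :
    DenseRange (z ^ · : ℕ → Circle) := by
  -- transported from the density of the multiples of an element of infinite order in `ℝ ⧸ ℤ`
  obtain ⟨a, rfl⟩ := (AddCircle.homeomorphCircle one_ne_zero).surjective z
  simp only [AddCircle.homeomorphCircle_apply] at hz ⊢
  have ha : addOrderOf a = 0 := by
    refine addOrderOf_eq_zero_iff'.2 fun n hn h ↦ hz (isOfFinOrder_iff_pow_eq_one.2 ⟨n, hn, ?_⟩)
    rw [← AddCircle.toCircle_nsmul, h, AddCircle.toCircle_zero]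
  rw [← denseRange_zpow_iff_pow]
  convert (AddCircle.homeomorphCircle one_ne_zero).surjective.denseRange.comp
    (AddCircle.denseRange_zsmul_iff.2 ha) (AddCircle.homeomorphCircle one_ne_zero).continuous
    using 1
  ext n
  simp [AddCircle.homeomorphCircle_apply, AddCircle.toCircle_zsmul]

theorem Circle.exists_re_mul_eq_zero (α : ℂ) : ∃ w : Circle, (α * w).re = 0 := by
  refine ⟨Circle.exp (Real.pi / 2 - arg α), ?_⟩
  have h : α * Circle.exp (Real.pi / 2 - arg α) = ‖α‖ * I :=
    calc α * Circle.exp (Real.pi / 2 - arg α)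
        = ‖α‖ * (Complex.exp (arg α * I) * Complex.exp ((Real.pi / 2 - arg α : ℝ) * I)) := by
          rw [← mul_assoc, norm_mul_exp_arg_mul_I, Circle.coe_exp]
      _ = ‖α‖ * Complex.exp (Real.pi / 2 * I) := by
          rw [← Complex.exp_add]; push_cast; ring_nf
      _ = ‖α‖ * I := by rw [exp_pi_div_two_mul_I]
  rw [h, re_ofReal_mul, I_re, mul_zero]

theorem Circle.exists_pow_abs_re_mul_lt (α : ℂ) {z : Circle} (hz : ¬IsOfFinOrder z) {ε : ℝ}
    (hε : 0 < ε) : ∃ n : ℕ, |(α * ↑(z ^ n)).re| < ε := by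
  obtain ⟨w, hw⟩ := Circle.exists_re_mul_eq_zero α
  have hU : IsOpen {u : Circle | |(α * u).re| < ε} :=
    isOpen_lt (by fun_prop) continuous_const
  exact (Circle.denseRange_pow hz).exists_mem_open hU
    ⟨w, show |(α * w).re| < ε by rwa [hw, abs_zero]⟩

theorem stmt13_general (α β l : ℂ)
    (hl : ‖l‖ = 1) (hinf : ∀ n : ℕ, 0 < n → l ^ n ≠ 1)
    (h : Matrix (Fin 2) (Fin 2) ℂ)
    (hh : h = !![α, β; (starRingEnd ℂ) β, (starRingEnd ℂ) α])
    (a : Matrix (Fin 2) (Fin 2) ℂ)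
    (ha : a = Matrix.diagonal ![l, (starRingEnd ℂ) l]) :
    (∀ n : ℕ, Matrix.trace (h * a ^ n) = (2 * (α * l ^ n).re : ℂ)) ∧
    (α ≠ 0 → ∃ n : ℕ, ‖Matrix.trace (h * a ^ n)‖ < 2) := by
  subst hh ha
  have htrace (n : ℕ) : trace (!![α, β; (starRingEnd ℂ) β, (starRingEnd ℂ) α] *
      diagonal ![l, (starRingEnd ℂ) l] ^ n) = (2 * (α * l ^ n).re : ℂ) := by
    rw [trace_fin_two_mul_diagonal_pow, ← map_pow, ← map_mul, add_conj, ofReal_mul, ofReal_ofNat]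
  refine ⟨htrace, fun _ ↦ ?_⟩
  let z : Circle := ⟨l, mem_sphere_zero_iff_norm.2 hl⟩
  have hz : ¬IsOfFinOrder z := by
    rw [isOfFinOrder_iff_pow_eq_one]
    rintro ⟨n, hn, hzn⟩
    exact hinf n hn (congrArg Circle.coeHom hzn)
  obtain ⟨n, hn⟩ := Circle.exists_pow_abs_re_mul_lt α hz one_pos
  refine ⟨n, ?_⟩
  have hre : |(α * l ^ n).re| < 1 := hn
  rw [htrace, norm_mul, Complex.norm_two, Complex.norm_real, Real.norm_eq_abs]
  linarith

theorem stmt13 (α β l : ℂ) (hSU : Complex.normSq α - Complex.normSq β = 1)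
    (hl : ‖l‖ = 1) (hinf : ∀ n : ℕ, 0 < n → l ^ n ≠ 1)
    (h : Matrix (Fin 2) (Fin 2) ℂ)
    (hh : h = !![α, β; (starRingEnd ℂ) β, (starRingEnd ℂ) α])
    (a : Matrix (Fin 2) (Fin 2) ℂ)
    (ha : a = Matrix.diagonal ![l, (starRingEnd ℂ) l]) :
    (∀ n : ℕ, Matrix.trace (h * a ^ n) = (2 * (α * l ^ n).re : ℂ)) ∧
    (α ≠ 0 → ∃ n : ℕ, ‖Matrix.trace (h * a ^ n)‖ < 2) :=
  stmt13_general α β l hl hinf h hh a ha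
end

section
/- The bracket of two vector fields on G × G of the form X(g,h) = (x₁(h), y₁(g)) and Y(g,h) = (x₂(h), y₂(g)), where x₁, x₂, y₁, y₂ : G → 𝔤 satisfy Ad(k)(xᵢ(k)) = xᵢ(k) and Ad(k)(yᵢ(k)) = yᵢ(k) for all k, is given (using left trivialization) by [X,Y]|_(g,h) = ( dx₂|_h(y₁(g)|_h) − dx₁|_h(y₂(g)|_h), dy₂|_g(x₁(h)|_g) − dy₁|_g(x₂(h)|_g) ); in particular the pointwise bracket term ([x₁(h),x₂(h)], [y₁(g),y₂(g)]) vanishes when g and h are regular elements. -/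
/-! Ad-invariance under `k` means commuting with `k`. A 2 × 2 matrix commuting with a non-scalar
`k` is of the form `α + β k`, with `β` read off from the off-diagonal entries or the difference of
the diagonal entries, so the centralizer of `k` is the commutative algebra `K[k]`. A regular
element of `SL₂` is not scalar, since `±1` are the only scalar matrices of determinant one. -/

attribute [local instance] Matrix.normedAddCommGroup Matrix.normedSpace

open Matrix

namespace Matrix

lemma commute_of_mul_mul_nonsing_inv_eq {n R : Type*} [Fintype n] [DecidableEq n] [CommRing R]
    {k a : Matrix n n R} (hk : IsUnit k.det) (h : k * a * k⁻¹ = a) : Commute k a := by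
  change k * a = a * k
  conv_rhs => rw [← h]
  rw [Matrix.mul_assoc (k * a), nonsing_inv_mul _ hk, Matrix.mul_one]

lemma ne_scalar_of_det_eq_one {R : Type*} [CommRing R] [NoZeroDivisors R]
    {k : Matrix (Fin 2) (Fin 2) R} (hdet : k.det = 1) (h2 : k.trace ≠ 2) (hm2 : k.trace ≠ -2)
    (c : R) : k ≠ scalar (Fin 2) c := by
  rintro rfl
  have hc : c = 1 ∨ c = -1 := by simpa [det_fin_two] using hdet
  rcases hc with rfl | rfl
  · exact h2 (by norm_num)
  · exact hm2 (by norm_num)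

variable {K : Type*} [Field K]

lemma mem_adjoin_singleton_of_offDiag_eq_smul {k a : Matrix (Fin 2) (Fin 2) K} (β : K)
    (h01 : a 0 1 = β * k 0 1) (h10 : a 1 0 = β * k 1 0)
    (hdiag : a 0 0 - a 1 1 = β * (k 0 0 - k 1 1)) :
    a ∈ Algebra.adjoin K {k} := by
  have ha : a = algebraMap K _ (a 0 0 - β * k 0 0) + β • k := by
    ext i j
    fin_cases i <;> fin_cases j <;> simp [algebraMap_eq_diagonal, h01, h10]
    linear_combination -hdiag
  rw [ha]
  exact add_mem (Subalgebra.algebraMap_mem _ _)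
    (Subalgebra.smul_mem _ (Algebra.self_mem_adjoin_singleton K k) β)

lemma mem_adjoin_singleton_of_commute {k a : Matrix (Fin 2) (Fin 2) K}
    (hk : ∀ c : K, k ≠ scalar (Fin 2) c) (h : Commute k a) : a ∈ Algebra.adjoin K {k} := by
  have e00 := congrFun (congrFun h.eq 0) 0
  have e01 := congrFun (congrFun h.eq 0) 1
  have e10 := congrFun (congrFun h.eq 1) 0
  simp only [mul_apply, Fin.sum_univ_two] at e00 e01 e10
  by_cases hq : k 0 1 = 0
  · by_cases hr : k 1 0 = 0
    · have hps : k 0 0 - k 1 1 ≠ 0 := by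
        intro hdiag
        refine hk (k 0 0) (ext fun i j => ?_)
        fin_cases i <;> fin_cases j <;> simp [hq, hr]
        linear_combination -hdiag
      refine mem_adjoin_singleton_of_offDiag_eq_smul ((a 0 0 - a 1 1) / (k 0 0 - k 1 1)) ?_ ?_ ?_
      · field_simp
        linear_combination e01
      · field_simp
        linear_combination -e10
      · field_simp
    · refine mem_adjoin_singleton_of_offDiag_eq_smul (a 1 0 / k 1 0) ?_ ?_ ?_
      · field_simp
        linear_combination -e00
      · field_simp
      · field_simp
        linear_combination e10
  · refine mem_adjoin_singleton_of_offDiag_eq_smul (a 0 1 / k 0 1) ?_ ?_ ?_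
    · field_simp
    · field_simp
      linear_combination e00
    · rw [div_mul_eq_mul_div, eq_div_iff hq]
      linear_combination -e01

lemma commute_of_commute_of_ne_scalar {k a b : Matrix (Fin 2) (Fin 2) K}
    (hk : ∀ c : K, k ≠ scalar (Fin 2) c) (ha : Commute k a) (hb : Commute k b) : Commute a b :=
  Algebra.commute_of_mem_adjoin_singleton_of_commute (mem_adjoin_singleton_of_commute hk hb)
    ha.symm

lemma commute_of_conj_eq_self_of_det_eq_one {k a b : Matrix (Fin 2) (Fin 2) K} (hdet : k.det = 1)
    (h2 : k.trace ≠ 2) (hm2 : k.trace ≠ -2) (ha : k * a * k⁻¹ = a) (hb : k * b * k⁻¹ = b) :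
    Commute a b := by
  have hk : IsUnit k.det := by simp [hdet]
  exact commute_of_commute_of_ne_scalar (ne_scalar_of_det_eq_one hdet h2 hm2)
    (commute_of_mul_mul_nonsing_inv_eq hk ha) (commute_of_mul_mul_nonsing_inv_eq hk hb)

end Matrix

/-- The bracket of two vector fields (x₁(h), y₁(g)) and (x₂(h), y₂(g)) on G × G in left
trivialization: the pointwise bracket term vanishes at regular (g,h), so the bracket
equals (dx₂(y₁) − dx₁(y₂), dy₂(x₁) − dy₁(x₂)). -/
theorem stmt18 (x₁ x₂ y₁ y₂ : Matrix (Fin 2) (Fin 2) ℝ → Matrix (Fin 2) (Fin 2) ℝ)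
    (hx₁ : ∀ k : SL2R, Matrix.trace (x₁ k) = 0 ∧
      (k : Matrix (Fin 2) (Fin 2) ℝ) * x₁ k * (k : Matrix (Fin 2) (Fin 2) ℝ)⁻¹ = x₁ k)
    (hx₂ : ∀ k : SL2R, Matrix.trace (x₂ k) = 0 ∧
      (k : Matrix (Fin 2) (Fin 2) ℝ) * x₂ k * (k : Matrix (Fin 2) (Fin 2) ℝ)⁻¹ = x₂ k)
    (hy₁ : ∀ k : SL2R, Matrix.trace (y₁ k) = 0 ∧
      (k : Matrix (Fin 2) (Fin 2) ℝ) * y₁ k * (k : Matrix (Fin 2) (Fin 2) ℝ)⁻¹ = y₁ k)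
    (hy₂ : ∀ k : SL2R, Matrix.trace (y₂ k) = 0 ∧
      (k : Matrix (Fin 2) (Fin 2) ℝ) * y₂ k * (k : Matrix (Fin 2) (Fin 2) ℝ)⁻¹ = y₂ k)
    (g h : SL2R)
    (hreg_g : Matrix.trace (g : Matrix (Fin 2) (Fin 2) ℝ) ≠ 2 ∧
      Matrix.trace (g : Matrix (Fin 2) (Fin 2) ℝ) ≠ -2)
    (hreg_h : Matrix.trace (h : Matrix (Fin 2) (Fin 2) ℝ) ≠ 2 ∧
      Matrix.trace (h : Matrix (Fin 2) (Fin 2) ℝ) ≠ -2) :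
    (fderiv ℝ x₂ (h : Matrix (Fin 2) (Fin 2) ℝ) ((h : Matrix (Fin 2) (Fin 2) ℝ) * y₁ g) -
        fderiv ℝ x₁ (h : Matrix (Fin 2) (Fin 2) ℝ) ((h : Matrix (Fin 2) (Fin 2) ℝ) * y₂ g) +
        (x₁ h * x₂ h - x₂ h * x₁ h),
      fderiv ℝ y₂ (g : Matrix (Fin 2) (Fin 2) ℝ) ((g : Matrix (Fin 2) (Fin 2) ℝ) * x₁ h) -
        fderiv ℝ y₁ (g : Matrix (Fin 2) (Fin 2) ℝ) ((g : Matrix (Fin 2) (Fin 2) ℝ) * x₂ h) +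
        (y₁ g * y₂ g - y₂ g * y₁ g)) =
    (fderiv ℝ x₂ (h : Matrix (Fin 2) (Fin 2) ℝ) ((h : Matrix (Fin 2) (Fin 2) ℝ) * y₁ g) -
        fderiv ℝ x₁ (h : Matrix (Fin 2) (Fin 2) ℝ) ((h : Matrix (Fin 2) (Fin 2) ℝ) * y₂ g),
      fderiv ℝ y₂ (g : Matrix (Fin 2) (Fin 2) ℝ) ((g : Matrix (Fin 2) (Fin 2) ℝ) * x₁ h) -
        fderiv ℝ y₁ (g : Matrix (Fin 2) (Fin 2) ℝ) ((g : Matrix (Fin 2) (Fin 2) ℝ) * x₂ h)) := by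
  have hx : Commute (x₁ h) (x₂ h) :=
    commute_of_conj_eq_self_of_det_eq_one h.2 hreg_h.1 hreg_h.2 (hx₁ h).2 (hx₂ h).2
  have hy : Commute (y₁ g) (y₂ g) :=
    commute_of_conj_eq_self_of_det_eq_one g.2 hreg_g.1 hreg_g.2 (hy₁ g).2 (hy₂ g).2
  rw [hx.eq, hy.eq, sub_self, sub_self, add_zero, add_zero]
end
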